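/- Suppose n is odd and A = {a_1,…,a_n} is a subset of F_q (q odd) with η(-δ_A(a_i)) = 1 for all i. Then there exist nonzero v_1,…,v_n with v_i^2 = -δ_A(a_i)^{-1} such that the extended GRS code GRS_{(n+1)/2}(A ∪ {∞}, v) is Euclidean self-dual. In particular, a q-ary MDS self-dual code of length n+1 exists. -/

import Mathlib

open Finset

variable {F : Type*} [Field F]

/-- `δ_A(aᵢ)` for a listed set `a : Fin n → F`. -/
noncomputable def delta {n : ℕ} (a : Fin n → F) (i : Fin n) : F :=
  ∏ j ∈ Finset.univ.erase i, (a i - a j)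

/-- `δ_S(x)` for a finite set `S ⊆ F`. -/
noncomputable def deltaSet [DecidableEq F] (S : Finset F) (x : F) : F :=
  ∏ y ∈ S.erase x, (x - y)

/-- Euclidean dual of a linear code. -/
def dualCode {n : ℕ} (C : Submodule F (Fin n → F)) : Submodule F (Fin n → F) where
  carrier := {x | ∀ y ∈ C, ∑ i, x i * y i = 0}
  add_mem' := by
    intro x y hx hy z hz
    simp [add_mul, Finset.sum_add_distrib, hx z hz, hy z hz]
  zero_mem' := by intro y hy; simp
  smul_mem' := by
    intro c x hx y hy
    simp [smul_eq_mul, mul_assoc, ← Finset.mul_sum, hx y hy]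

/-- Hamming weight. -/
noncomputable def wt {n : ℕ} (c : Fin n → F) : ℕ := Nat.card {i // c i ≠ 0}

/-- `C` is an `[n, k, n-k+1]` MDS code. -/
noncomputable def IsMDSCode {n : ℕ} (C : Submodule F (Fin n → F)) (k : ℕ) : Prop :=
  Module.finrank F C = k ∧ ∀ c ∈ C, c ≠ 0 → n - k + 1 ≤ wt c

noncomputable def GRSmap {n : ℕ} (a v : Fin n → F) : Polynomial F →ₗ[F] (Fin n → F) where
  toFun f := fun i => v i * Polynomial.eval (a i) f
  map_add' f g := by funext i; simp [mul_add]
  map_smul' c f := by funext i; simp [Polynomial.eval_smul]; ring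

/-- Generalized Reed–Solomon code `GRS_k(A, v)`. -/
noncomputable def GRS {n : ℕ} (k : ℕ) (a v : Fin n → F) : Submodule F (Fin n → F) :=
  Submodule.map (GRSmap a v) (Polynomial.degreeLT F k)

noncomputable def GRSextMap {n : ℕ} (k : ℕ) (a v : Fin n → F) :
    Polynomial F →ₗ[F] (Fin (n+1) → F) where
  toFun f := fun i =>
    if h : (i : ℕ) < n then v ⟨i, h⟩ * Polynomial.eval (a ⟨i, h⟩) f else f.coeff (k - 1)
  map_add' f g := by
    funext i
    by_cases h : (i : ℕ) < n <;> simp [h, mul_add]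
  map_smul' c f := by
    funext i
    by_cases h : (i : ℕ) < n <;> simp [h, Polynomial.eval_smul] <;> ring

/-- Extended generalized Reed–Solomon code `GRS_k(A ∪ {∞}, v)`. -/
noncomputable def GRSext {n : ℕ} (k : ℕ) (a v : Fin n → F) : Submodule F (Fin (n+1) → F) :=
  Submodule.map (GRSextMap k a v) (Polynomial.degreeLT F k)

/-!
Take `v i` with `v i ^ 2 = -δ(a i)⁻¹`. For `f, g` of degree `≤ m` (here `n = 2m + 1`), the inner
product of their codewords is `-∑ᵢ (f g)(a i) / δ(a i) + f_m g_m`. Lagrange interpolation at the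
`2m + 1` points identifies the sum with the coefficient of `X ^ 2m` in `f g`, which is `f_m g_m`.
So the code is self-orthogonal, and as its dimension `m + 1` is half the length it is self-dual.
-/

open Polynomial Function

namespace Lagrange

variable {ι : Type*} [DecidableEq ι] {s : Finset ι} {x : ι → F}

theorem coeff_basis_card_sub_one {i : ι} (hi : i ∈ s) :
    (Lagrange.basis s x i).coeff (#s - 1) = nodalWeight s x i := by
  rw [basis_eq_prod_sub_inv_mul_nodal_div hi, ← nodal_erase_eq_nodal_div hi, coeff_C_mul,
    ← card_erase_of_mem hi, ← natDegree_nodal (v := x), nodal_monic.coeff_natDegree, mul_one]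

theorem coeff_card_sub_one_eq_sum (hxs : Set.InjOn x s) {f : F[X]} (hf : f.degree < #s) :
    f.coeff (#s - 1) = ∑ i ∈ s, nodalWeight s x i * f.eval (x i) := by
  conv_lhs => rw [eq_interpolate hxs hf, interpolate_apply, finsetSum_coeff]
  refine sum_congr rfl fun i hi => ?_
  rw [coeff_C_mul, coeff_basis_card_sub_one hi, mul_comm]

end Lagrange

theorem nodalWeight_univ_eq_inv_delta {n : ℕ} (a : Fin n → F) (i : Fin n) :
    Lagrange.nodalWeight univ a i = (delta a i)⁻¹ := by
  rw [Lagrange.nodalWeight, delta, prod_inv_distrib]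

theorem delta_ne_zero {n : ℕ} {a : Fin n → F} (ha : Injective a) (i : Fin n) : delta a i ≠ 0 :=
  prod_ne_zero_iff.mpr fun _ hj => sub_ne_zero.mpr <| ha.ne (mem_erase.mp hj).1.symm

section dualCode

variable {N : ℕ}

theorem dualCode_eq_orthogonal (C : Submodule F (Fin N → F)) :
    dualCode C = (Matrix.toBilin' (1 : Matrix (Fin N) (Fin N) F)).orthogonal C := by
  ext x
  refine forall₂_congr fun y _ => ?_
  simp [Matrix.toBilin'_apply', dotProduct, mul_comm]

theorem finrank_dualCode (C : Submodule F (Fin N → F)) :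
    Module.finrank F (dualCode C) = N - Module.finrank F C := by
  rw [dualCode_eq_orthogonal, LinearMap.BilinForm.finrank_orthogonal
    (Matrix.nondegenerate_of_det_ne_zero (by simp)).toBilin', Module.finrank_fin_fun]

theorem eq_dualCode_of_le_of_two_mul_finrank {C : Submodule F (Fin N → F)}
    (hle : C ≤ dualCode C) (hdim : 2 * Module.finrank F C = N) : C = dualCode C :=
  Submodule.eq_of_le_of_finrank_le hle (by rw [finrank_dualCode]; omega)

end dualCode

theorem wt_eq_card_filter [DecidableEq F] {N : ℕ} (c : Fin N → F) : wt c = #{i | c i ≠ 0} := by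
  rw [wt, Nat.card_eq_fintype_card, Fintype.card_subtype]

theorem card_filter_eval_eq_zero_le_natDegree [DecidableEq F] {n : ℕ} {a : Fin n → F}
    (ha : Injective a) {f : F[X]} (hf : f ≠ 0) : #{i | f.eval (a i) = 0} ≤ f.natDegree := by
  rw [← card_image_of_injective _ ha]
  refine card_le_degree_of_subset_roots fun y hy => ?_
  obtain ⟨i, hi, rfl⟩ := mem_image.mp (mem_def.mpr hy)
  exact (mem_roots hf).mpr (mem_filter.mp hi).2

section GRSext

variable {n k : ℕ} {a v : Fin n → F}

@[simp]
theorem GRSextMap_castSucc (f : F[X]) (i : Fin n) :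
    GRSextMap k a v f i.castSucc = v i * f.eval (a i) := by
  simp [GRSextMap]

@[simp]
theorem GRSextMap_last (f : F[X]) : GRSextMap k a v f (Fin.last n) = f.coeff (k - 1) := by
  simp [GRSextMap]

theorem sum_GRSextMap_mul_GRSextMap (f g : F[X]) :
    ∑ i, GRSextMap k a v f i * GRSextMap k a v g i =
      ∑ i, v i ^ 2 * (f * g).eval (a i) + f.coeff (k - 1) * g.coeff (k - 1) := by
  rw [Fin.sum_univ_castSucc]
  simp only [GRSextMap_castSucc, GRSextMap_last, eval_mul]
  congr 1
  exact sum_congr rfl fun i _ => by ring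

theorem wt_GRSextMap [DecidableEq F] {f : F[X]} (hv : ∀ i, v i ≠ 0) :
    wt (GRSextMap k a v f) = #{i | f.eval (a i) ≠ 0} + if f.coeff (k - 1) = 0 then 0 else 1 := by
  rw [wt_eq_card_filter, card_filter, Fin.sum_univ_castSucc, card_filter]
  simp [hv]

/-- A nonzero `f` of degree `< k` has at most `k - 1` zeros among the `n + 1` coordinates: at most
`natDegree f` at the points `a i`, and one more at `∞` only if `f` has degree `< k - 1`. -/
theorem le_wt_GRSextMap (ha : Injective a) (hv : ∀ i, v i ≠ 0) (hk : k ≤ n + 1) {f : F[X]}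
    (hf : f ∈ degreeLT F k) (hf0 : f ≠ 0) : n + 1 - k + 1 ≤ wt (GRSextMap k a v f) := by
  classical
  have hdeg : f.natDegree < k := (natDegree_lt_iff_degree_lt hf0).mpr (mem_degreeLT.mp hf)
  have hzeros := card_filter_eval_eq_zero_le_natDegree ha hf0
  have hsplit := card_filter_add_card_filter_not (s := univ) fun i => f.eval (a i) = 0
  simp only [card_univ, Fintype.card_fin, ← ne_eq] at hsplit
  rw [wt_GRSextMap hv]
  split_ifs with hlast
  · have : f.natDegree ≠ k - 1 := fun h =>
      leadingCoeff_ne_zero.mpr hf0 (by rw [leadingCoeff, h, hlast])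
    omega
  · omega

theorem GRSextMap_ne_zero (ha : Injective a) (hv : ∀ i, v i ≠ 0) (hk : k ≤ n + 1) {f : F[X]}
    (hf : f ∈ degreeLT F k) (hf0 : f ≠ 0) : GRSextMap k a v f ≠ 0 := by
  intro h
  have := le_wt_GRSextMap ha hv hk hf hf0
  simp [h, wt] at this

theorem finrank_GRSext (ha : Injective a) (hv : ∀ i, v i ≠ 0) (hk : k ≤ n + 1) :
    Module.finrank F (GRSext k a v) = k := by
  have hinj : Injective ((GRSextMap k a v).domRestrict (degreeLT F k)) := by
    rw [← LinearMap.ker_eq_bot, LinearMap.ker_eq_bot']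
    rintro ⟨f, hf⟩ h
    by_contra hf0
    exact GRSextMap_ne_zero ha hv hk hf (by simpa using hf0) h
  rw [GRSext, ← LinearMap.range_domRestrict, LinearMap.finrank_range_of_inj hinj,
    (degreeLTEquiv F k).finrank_eq, Module.finrank_fin_fun]

theorem isMDSCode_GRSext (ha : Injective a) (hv : ∀ i, v i ≠ 0) (hk : k ≤ n + 1) :
    IsMDSCode (GRSext k a v) k := by
  refine ⟨finrank_GRSext ha hv hk, ?_⟩
  rintro _ ⟨f, hf, rfl⟩ hc
  exact le_wt_GRSextMap ha hv hk hf fun h => hc (by rw [h, map_zero])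

end GRSext

theorem exists_sq_eq_neg_inv_delta {n : ℕ} {a : Fin n → F} (ha : Injective a)
    (hη : ∀ i, IsSquare (-delta a i)) :
    ∃ v : Fin n → F, (∀ i, v i ≠ 0) ∧ ∀ i, v i ^ 2 = -(delta a i)⁻¹ := by
  choose v hv using fun i => (hη i).inv
  refine ⟨v, fun i hi => delta_ne_zero ha i ?_, fun i => by rw [sq, ← hv, inv_neg]⟩
  simpa [hi] using hv i

theorem GRSext_le_dualCode {m : ℕ} {a v : Fin (2 * m + 1) → F} (ha : Injective a)
    (hv : ∀ i, v i ^ 2 = -(delta a i)⁻¹) :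
    GRSext (m + 1) a v ≤ dualCode (GRSext (m + 1) a v) := by
  rintro _ ⟨f, hf, rfl⟩ _ ⟨g, hg, rfl⟩
  rw [SetLike.mem_coe, degreeLT_succ_eq_degreeLE, mem_degreeLE,
    ← natDegree_le_iff_degree_le] at hf hg
  have hdeg : (f * g).degree < #(univ : Finset (Fin (2 * m + 1))) := by
    rw [card_univ, Fintype.card_fin]
    exact (degree_le_of_natDegree_le (natDegree_mul_le_of_le hf hg)).trans_lt
      (by exact_mod_cast (by omega : m + m < 2 * m + 1))
  have htop : (f * g).coeff (m + m) = ∑ i, (delta a i)⁻¹ * (f * g).eval (a i) := by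
    simpa [nodalWeight_univ_eq_inv_delta, show 2 * m + 1 - 1 = m + m by omega] using
      Lagrange.coeff_card_sub_one_eq_sum ha.injOn hdeg
  rw [sum_GRSextMap_mul_GRSextMap, Nat.add_sub_cancel]
  simp_rw [hv, neg_mul, sum_neg_distrib, ← htop, coeff_mul_add_eq_of_natDegree_le hf hg]
  ring

theorem stmt3_general {F : Type*} [Field F] {n : ℕ} (hn : Odd n) (a : Fin n ↪ F)
    (hη : ∀ i, IsSquare (-(delta ⇑a i))) :
    ∃ v : Fin n → F, (∀ i, v i ≠ 0) ∧
      (∀ i, v i ^ 2 = -(delta ⇑a i)⁻¹) ∧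
      GRSext ((n + 1) / 2) ⇑a v = dualCode (GRSext ((n + 1) / 2) ⇑a v) ∧
      IsMDSCode (GRSext ((n + 1) / 2) ⇑a v) ((n + 1) / 2) := by
  obtain ⟨m, rfl⟩ := hn
  obtain ⟨v, hv0, hv⟩ := exists_sq_eq_neg_inv_delta a.injective hη
  have hk : (2 * m + 1 + 1) / 2 = m + 1 := by omega
  have hmds : IsMDSCode (GRSext (m + 1) a v) (m + 1) :=
    isMDSCode_GRSext a.injective hv0 (by omega)
  refine ⟨v, hv0, hv, ?_, hk ▸ hmds⟩
  rw [hk]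
  exact eq_dualCode_of_le_of_two_mul_finrank (GRSext_le_dualCode a.injective hv)
    (by rw [hmds.1]; ring)

/-- Lemma 3: if `n` is odd and `η(-δ_A(aᵢ)) = 1` for all `i`, there is a vector `v` with
`vᵢ² = -δ_A(aᵢ)⁻¹` making the extended code `GRS_{(n+1)/2}(A ∪ ∞, v)` Euclidean self-dual;
in particular a `q`-ary MDS self-dual code of length `n + 1` exists. -/
theorem stmt3 {F : Type*} [Field F] [Fintype F] (hodd : Odd (Fintype.card F))
    {n : ℕ} (hn : Odd n) (a : Fin n ↪ F)
    (hη : ∀ i, IsSquare (-(delta ⇑a i))) :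
    ∃ v : Fin n → F, (∀ i, v i ≠ 0) ∧
      (∀ i, v i ^ 2 = -(delta ⇑a i)⁻¹) ∧
      GRSext ((n + 1) / 2) ⇑a v = dualCode (GRSext ((n + 1) / 2) ⇑a v) ∧
      IsMDSCode (GRSext ((n + 1) / 2) ⇑a v) ((n + 1) / 2) :=
  stmt3_general hn a hη
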